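/- arXiv:2308.13197 — 3 statements merged into one kernel-verified Lean document; each statement's English description precedes it below -/
import Mathlib

section
/- Let \eta be a unimodular complex number, \phi an analytic self-map of the unit disk, \psi a nonzero analytic function on the disk, and k a positive integer, \alpha > -1. Suppose that for all z, w in the unit disk: \psi(z) w^k (1 - \eta \phi(w) z)^{k+\alpha+2} = \psi(w) z^k (1 - \eta w \phi(z))^{k+\alpha+2}. Then \psi(0) = 0, and writing \psi(z) = z^m g(z) with g holomorphic and g(0) \neq 0, one necessarily has m = k. -/
open Metric Complex Filter Topology

/-!
Since `ψ(0) = 0`, a point `w` with `ψ(w) ≠ 0` is nonzero. Fixing it, the identity reads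
`z^m · g(z) wᵏ (1 - η φ(w) z)^{k+α+2} = zᵏ · ψ(w) (1 - η w φ(z))^{k+α+2}` near `0`, and both cofactors
of the powers of `z` are continuous and nonzero at `0` (the bases lie in the slit plane because
`|η w φ(z)| < 1`), so the two powers of `z` must agree.
-/

theorem eq_zero_of_pow_mul_eventuallyEq {𝕜 : Type*} [NontriviallyNormedField 𝕜] {F G : 𝕜 → 𝕜}
    {m k : ℕ} (hmk : m < k) (hF : ContinuousAt F 0) (hG : ContinuousAt G 0)
    (h : ∀ᶠ z in 𝓝[≠] 0, z ^ m * F z = z ^ k * G z) : F 0 = 0 := by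
  have hGF : ∀ᶠ z in 𝓝[≠] 0, z ^ (k - m) * G z = F z := by
    filter_upwards [h, self_mem_nhdsWithin] with z hz hz0
    apply mul_left_cancel₀ (pow_ne_zero m hz0)
    rw [hz, ← mul_assoc, ← pow_add, Nat.add_sub_cancel' hmk.le]
  have hlim : Tendsto (fun z => z ^ (k - m) * G z) (𝓝[≠] 0) (𝓝 (0 ^ (k - m) * G 0)) :=
    ((continuousAt_pow _ _).mul hG).tendsto.mono_left nhdsWithin_le_nhds
  rw [zero_pow (Nat.sub_ne_zero_of_lt hmk), zero_mul] at hlim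
  exact tendsto_nhds_unique (hF.tendsto.mono_left nhdsWithin_le_nhds) (hlim.congr' hGF)

theorem eq_of_pow_mul_eventuallyEq {𝕜 : Type*} [NontriviallyNormedField 𝕜] {F G : 𝕜 → 𝕜}
    {m k : ℕ} (hF : ContinuousAt F 0) (hG : ContinuousAt G 0) (hF0 : F 0 ≠ 0) (hG0 : G 0 ≠ 0)
    (h : ∀ᶠ z in 𝓝[≠] 0, z ^ m * F z = z ^ k * G z) : m = k := by
  rcases lt_trichotomy m k with hlt | heq | hgt
  · exact absurd (eq_zero_of_pow_mul_eventuallyEq hlt hF hG h) hF0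
  · exact heq
  · exact absurd (eq_zero_of_pow_mul_eventuallyEq hgt hG hF (h.mono fun _ hz => hz.symm)) hG0

theorem one_sub_mem_slitPlane {u : ℂ} (hu : ‖u‖ < 1) : 1 - u ∈ slitPlane := by
  simpa [sub_eq_add_neg] using mem_slitPlane_of_norm_lt_one (z := -u) (by simpa)

theorem one_sub_cpow_ne_zero {u : ℂ} (hu : ‖u‖ < 1) (c : ℂ) : (1 - u) ^ c ≠ 0 := by
  rw [Ne, cpow_eq_zero_iff, not_and]
  exact fun h => absurd h (slitPlane_ne_zero (one_sub_mem_slitPlane hu))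

theorem ContinuousAt.one_sub_cpow {f : ℂ → ℂ} {z₀ : ℂ} (hf : ContinuousAt f z₀)
    (hf₀ : ‖f z₀‖ < 1) (c : ℂ) : ContinuousAt (fun z => (1 - f z) ^ c) z₀ :=
  (continuousAt_const.sub hf).cpow continuousAt_const (one_sub_mem_slitPlane hf₀)

theorem norm_mul_mul_lt_one {η a b : ℂ} (hη : ‖η‖ = 1) (ha : ‖a‖ < 1) (hb : ‖b‖ < 1) :
    ‖η * a * b‖ < 1 := by
  rw [norm_mul, norm_mul, hη, one_mul]
  exact mul_lt_one_of_nonneg_of_lt_one_left (norm_nonneg a) ha hb.le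

theorem stmt6_general (η : ℂ) (hη : ‖η‖ = 1) (α : ℝ) (k : ℕ) (hk : 1 ≤ k)
    (φ ψ : ℂ → ℂ)
    (hφ : DifferentiableOn ℂ φ (ball 0 1))
    (hφm : ∀ z ∈ ball (0 : ℂ) 1, φ z ∈ ball (0 : ℂ) 1)
    (hψne : ∃ z ∈ ball (0 : ℂ) 1, ψ z ≠ 0)
    (hid : ∀ z ∈ ball (0 : ℂ) 1, ∀ w ∈ ball (0 : ℂ) 1,
      ψ z * w ^ k * (1 - η * φ w * z) ^ (((k : ℝ) + α + 2 : ℝ) : ℂ)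
        = ψ w * z ^ k * (1 - η * w * φ z) ^ (((k : ℝ) + α + 2 : ℝ) : ℂ)) :
    ψ 0 = 0 ∧
    ∀ (m : ℕ) (g : ℂ → ℂ), 0 < m → DifferentiableOn ℂ g (ball 0 1) → g 0 ≠ 0 →
      (∀ z ∈ ball (0 : ℂ) 1, ψ z = z ^ m * g z) → m = k := by
  set c : ℂ := (((k : ℝ) + α + 2 : ℝ) : ℂ)
  have h0 : (0 : ℂ) ∈ ball (0 : ℂ) 1 := mem_ball_self one_pos
  have hψ0 : ψ 0 = 0 := by
    have h := hid (1 / 2) (by norm_num [mem_ball]) 0 h0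
    simpa [zero_pow (by omega : k ≠ 0)] using h.symm
  refine ⟨hψ0, fun m g _ hg hg0 hfac => ?_⟩
  obtain ⟨w, hw, hψw⟩ := hψne
  have hw0 : w ≠ 0 := by rintro rfl; exact hψw hψ0
  have hB : ‖η * w * φ 0‖ < 1 :=
    norm_mul_mul_lt_one hη (mem_ball_zero_iff.mp hw) (mem_ball_zero_iff.mp (hφm 0 h0))
  have hφc := (hφ.differentiableAt (isOpen_ball.mem_nhds h0)).continuousAt
  have hgc := (hg.differentiableAt (isOpen_ball.mem_nhds h0)).continuousAt
  refine eq_of_pow_mul_eventuallyEq (F := fun z => g z * w ^ k * (1 - η * φ w * z) ^ c)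
    (G := fun z => ψ w * (1 - η * w * φ z) ^ c)
    ((hgc.mul continuousAt_const).mul ((by fun_prop : ContinuousAt (η * φ w * ·) 0).one_sub_cpow
      (by simp) c))
    (continuousAt_const.mul ((continuousAt_const.mul hφc).one_sub_cpow hB c))
    (by simp [hg0, hw0]) (mul_ne_zero hψw (one_sub_cpow_ne_zero hB c)) ?_
  filter_upwards [nhdsWithin_le_nhds (isOpen_ball.mem_nhds h0)] with z hz
  have h := hid z hz w hw
  rw [hfac z hz] at h
  linear_combination h

/-- If `ψ(z) wᵏ (1 - η φ(w) z)^{k+α+2} = ψ(w) zᵏ (1 - η w φ(z))^{k+α+2}` for all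
`z, w ∈ 𝔻`, then `ψ(0) = 0`, and the order of vanishing of `ψ` at `0` equals `k`. -/
theorem stmt6 (η : ℂ) (hη : ‖η‖ = 1) (α : ℝ) (hα : -1 < α) (k : ℕ) (hk : 1 ≤ k)
    (φ ψ : ℂ → ℂ)
    (hφ : DifferentiableOn ℂ φ (ball 0 1))
    (hφm : ∀ z ∈ ball (0 : ℂ) 1, φ z ∈ ball (0 : ℂ) 1)
    (hψ : DifferentiableOn ℂ ψ (ball 0 1))
    (hψne : ∃ z ∈ ball (0 : ℂ) 1, ψ z ≠ 0)
    (hid : ∀ z ∈ ball (0 : ℂ) 1, ∀ w ∈ ball (0 : ℂ) 1,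
      ψ z * w ^ k * (1 - η * φ w * z) ^ (((k : ℝ) + α + 2 : ℝ) : ℂ)
        = ψ w * z ^ k * (1 - η * w * φ z) ^ (((k : ℝ) + α + 2 : ℝ) : ℂ)) :
    ψ 0 = 0 ∧
    ∀ (m : ℕ) (g : ℂ → ℂ), 0 < m → DifferentiableOn ℂ g (ball 0 1) → g 0 ≠ 0 →
      (∀ z ∈ ball (0 : ℂ) 1, ψ z = z ^ m * g z) → m = k :=
  stmt6_general η hη α k hk φ ψ hφ hφm hψne hid
end

section
/- Suppose L is a compact operator on a Hilbert space with orthonormal basis (e_m)_{m \geq 0} such that L e_m = \lambda_m e_m for a sequence of complex numbers (\lambda_m). Then the spectrum of L equals the closure of \{\lambda_m : m \geq 0\} \cup \{0\}; in particular, applied with \lambda_m = \sum_{k=1}^{\min(m,n)} c_k a_k \frac{m!}{(m-k)!} c^{m-k}, the spectrum of the compact operator L f = \sum_{k=1}^n c_k a_k z^k f^{(k)}(cz) on the weighted Bergman space is \{0\} \cup \{\lambda_m : m \geq 1\}. -/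
/-!
By the Fredholm alternative, every nonzero point of the spectrum of a compact operator is an
eigenvalue, and an eigenvector of an operator that is diagonal in a Hilbert basis has a nonzero
coordinate `⟪e m, x⟫`, which forces the eigenvalue to be `λ_m`. Conversely every `λ_m` is an
eigenvalue, and `0` lies in the spectrum because a compact operator on an infinite-dimensional
Banach space is never invertible. Hence the spectrum is `{0} ∪ {λ_m}`, which is closed; for the
Bergman-space eigenvalues `λ_0 = 0`, so it equals `{0} ∪ {λ_m : m ≥ 1}`.
-/

open scoped InnerProductSpace
open Module End

theorem IsCompactOperator.zero_mem_spectrum {𝕜 X : Type*} [NontriviallyNormedField 𝕜]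
    [CompleteSpace 𝕜] [NormedAddCommGroup X] [NormedSpace 𝕜 X]
    {T : X →L[𝕜] X} (hT : IsCompactOperator T) (hX : ¬FiniteDimensional 𝕜 X) :
    0 ∈ spectrum 𝕜 T := by
  rw [spectrum.zero_mem_iff]
  intro hunit
  have hid : (id : X → X) = ⇑(↑hunit.unit⁻¹ : X →L[𝕜] X) ∘ ⇑T :=
    funext fun x ↦ congr($hunit.val_inv_mul x).symm
  exact hX (.of_isCompactOperator_id (hid ▸ hT.clm_comp _))

namespace HilbertBasis

variable {ι 𝕜 E : Type*} [RCLike 𝕜] [NormedAddCommGroup E] [InnerProductSpace 𝕜 E]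

theorem not_finiteDimensional [Infinite ι] (b : HilbertBasis ι 𝕜 E) :
    ¬FiniteDimensional 𝕜 E :=
  fun _ ↦ Module.Finite.not_linearIndependent_of_infinite _ b.orthonormal.linearIndependent

variable (b : HilbertBasis ι 𝕜 E) {T : E →L[𝕜] E} {lam : ι → 𝕜}

theorem inner_apply_of_apply_eq_smul (hT : ∀ i, T (b i) = lam i • b i) (i : ι) (x : E) :
    ⟪b i, T x⟫_𝕜 = lam i * ⟪b i, x⟫_𝕜 := by
  have hdense : Dense (Submodule.span 𝕜 (Set.range b) : Set E) :=
    Submodule.dense_iff_topologicalClosure_eq_top.mpr b.dense_span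
  have heq : (innerSL 𝕜 (b i)).comp T = lam i • innerSL 𝕜 (b i) := by
    refine ContinuousLinearMap.ext_on hdense ?_
    rintro _ ⟨j, rfl⟩
    rcases eq_or_ne i j with rfl | hij
    · simp [hT]
    · simp [hT, b.orthonormal.inner_eq_zero hij]
  simpa using congr($heq x)

theorem hasEigenvalue_of_apply_eq_smul (hT : ∀ i, T (b i) = lam i • b i) (i : ι) :
    HasEigenvalue (T : End 𝕜 E) (lam i) :=
  hasEigenvalue_of_hasEigenvector ⟨mem_eigenspace_iff.mpr (hT i), b.orthonormal.ne_zero i⟩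

theorem mem_range_of_hasEigenvalue (hT : ∀ i, T (b i) = lam i • b i) {μ : 𝕜}
    (hμ : HasEigenvalue (T : End 𝕜 E) μ) : μ ∈ Set.range lam := by
  obtain ⟨x, hx_mem, hx_ne⟩ := hμ.exists_hasEigenvector
  have hTx : T x = μ • x := mem_eigenspace_iff.mp hx_mem
  obtain ⟨i, hi⟩ : ∃ i, ⟪b i, x⟫_𝕜 ≠ 0 := by
    by_contra! h
    refine hx_ne (b.repr.map_eq_zero_iff.mp (lp.ext (funext fun i ↦ ?_)))
    simp [b.repr_apply_apply, h]
  refine ⟨i, mul_right_cancel₀ hi ?_⟩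
  rw [← b.inner_apply_of_apply_eq_smul hT, hTx, inner_smul_right]

theorem spectrum_eq_insert_zero_range [CompleteSpace E] [Infinite ι]
    (hcomp : IsCompactOperator T) (hT : ∀ i, T (b i) = lam i • b i) :
    spectrum 𝕜 T = insert 0 (Set.range lam) := by
  refine subset_antisymm (fun μ hμ ↦ ?_) (Set.insert_subset ?_ ?_)
  · rcases eq_or_ne μ 0 with rfl | hμ0
    · exact Set.mem_insert _ _
    · exact Or.inr (b.mem_range_of_hasEigenvalue hT
        ((hcomp.hasEigenvalue_iff_mem_spectrum hμ0).mpr hμ))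
  · exact hcomp.zero_mem_spectrum b.not_finiteDimensional
  · rintro _ ⟨i, rfl⟩
    rw [ContinuousLinearMap.spectrum_eq]
    exact (b.hasEigenvalue_of_apply_eq_smul hT i).mem_spectrum

end HilbertBasis

/-- The spectrum of a compact operator acting diagonally on an orthonormal basis
`(e_m)` with eigenvalues `λ_m` is the closure of `{λ_m} ∪ {0}`; in particular,
for `λ_m = ∑_{k=1}^{min(m,n)} c_k a_k (m!/(m-k)!) c^{m-k}` the spectrum is
`{0} ∪ {λ_m : m ≥ 1}`. -/
theorem stmt17 {H : Type*} [NormedAddCommGroup H] [InnerProductSpace ℂ H]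
    [CompleteSpace H]
    (e : HilbertBasis ℕ ℂ H)
    (T : H →L[ℂ] H) (hcomp : IsCompactOperator T)
    (lam : ℕ → ℂ) (hT : ∀ m : ℕ, T (e m) = lam m • e m)
    (n : ℕ) (a c : ℕ → ℂ) (cc : ℂ) :
    spectrum ℂ T = closure (Set.range lam ∪ {0}) ∧
    ((∀ m : ℕ, lam m = ∑ k ∈ Finset.Icc 1 (min m n),
        c k * a k * ((m.factorial : ℂ) / ((m - k).factorial : ℂ)) * cc ^ (m - k)) →
      spectrum ℂ T = {0} ∪ {z : ℂ | ∃ m : ℕ, 1 ≤ m ∧ z = lam m}) := by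
  have hspec := e.spectrum_eq_insert_zero_range hcomp hT
  refine ⟨?_, fun hlam ↦ ?_⟩
  · rw [Set.union_singleton, ← hspec, (spectrum.isClosed T).closure_eq]
  · have hlam0 : lam 0 = 0 := by simp [hlam 0]
    rw [hspec]
    ext z
    constructor
    · rintro (rfl | ⟨_ | m, rfl⟩)
      · exact Or.inl rfl
      · exact Or.inl hlam0
      · exact Or.inr ⟨m + 1, m.succ_pos, rfl⟩
    · rintro (rfl | ⟨m, -, rfl⟩)
      · exact Or.inl rfl
      · exact Or.inr ⟨m, rfl⟩
end

section
/- Let \phi(z) = cz with c \in \mathbb{C}, \psi_k(z) = a_k z^k for k = 1, \ldots, n, and L f(z) = \sum_{k=1}^n c_k a_k z^k f^{(k)}(cz). If f is holomorphic on the unit disk, \lambda \in \mathbb{C}, L f = \lambda f, f is not identically zero, and m is the order of vanishing of f at 0 (i.e., f^{(j)}(0) = 0 for j < m and f^{(m)}(0) \neq 0), then \lambda = \sum_{k=1}^{\min(m,n)} c_k a_k \frac{m!}{(m-k)!} c^{m-k} (interpreted as 0 when m = 0). -/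
open Metric Complex

/-!
In the Leibniz expansion of the `m`-th derivative of `z ^ k * g z` at `0` only the term in which
`z ^ k` is differentiated exactly `k` times survives. With `g z = f⁽ᵏ⁾(c z)` this gives
`m! / (m - k)! * c ^ (m - k) * f⁽ᵐ⁾(0)` (and `0` if `k > m`), so differentiating `L f = λ f`
`m` times at `0` yields `(∑ₖ cₖ aₖ m! / (m - k)! c ^ (m - k)) f⁽ᵐ⁾(0) = λ f⁽ᵐ⁾(0)`, and
`f⁽ᵐ⁾(0) ≠ 0` can be cancelled.
-/

section IteratedDeriv

variable {𝕜 : Type*} [NontriviallyNormedField 𝕜]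
  {F : Type*} [NormedAddCommGroup F] [NormedSpace 𝕜 F]

theorem iteratedDeriv_iteratedDeriv (j k : ℕ) (f : 𝕜 → F) :
    iteratedDeriv j (iteratedDeriv k f) = iteratedDeriv (j + k) f := by
  simp only [iteratedDeriv_eq_iterate, Function.iterate_add_apply]

/- Unlike `iteratedDeriv_comp_const_mul`, this needs no smoothness of `g`, because
`deriv_comp_mul_left` holds for every function. -/
theorem iteratedDeriv_comp_mul_left (n : ℕ) (g : 𝕜 → F) (c x : 𝕜) :
    iteratedDeriv n (fun z => g (c * z)) x = c ^ n • iteratedDeriv n g (c * x) := by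
  induction n generalizing g with
  | zero => simp
  | succ n ih =>
    have hderiv : deriv (fun z => g (c * z)) = fun z => c • deriv g (c * z) :=
      funext fun z => deriv_comp_mul_left c g z
    rw [iteratedDeriv_succ', hderiv, iteratedDeriv_fun_const_smul_field, ih, iteratedDeriv_succ',
      smul_smul, pow_succ']

theorem iteratedDeriv_pow_mul_zero {m : ℕ} (k : ℕ) {g : 𝕜 → 𝕜} (hg : ContDiffAt 𝕜 m g 0) :
    iteratedDeriv m (fun z => z ^ k * g z) 0
      = m.descFactorial k * iteratedDeriv (m - k) g 0 := by
  have hpow : ContDiffAt 𝕜 m (· ^ k) (0 : 𝕜) := contDiffAt_id.pow k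
  rw [iteratedDeriv_fun_mul hpow hg]
  simp only [iteratedDeriv_fun_pow_zero]
  rcases le_or_gt k m with hkm | hmk
  · rw [Finset.sum_eq_single_of_mem k (Finset.mem_range.mpr (by omega))
      (fun i _ hik => by simp [hik]), Nat.descFactorial_eq_factorial_mul_choose]
    push_cast [if_pos rfl]
    ring
  · rw [Nat.descFactorial_eq_zero_iff_lt.mpr hmk, Finset.sum_eq_zero]
    · simp
    · intro i hi
      have : i ≠ k := by rw [Finset.mem_range] at hi; omega
      simp [this]

theorem contDiffAt_comp_mul_left_zero {n : WithTop ℕ∞} {g : 𝕜 → 𝕜} (hg : ContDiffAt 𝕜 n g 0)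
    (c : 𝕜) : ContDiffAt 𝕜 n (fun z => g (c * z)) 0 := by
  rw [← mul_zero c] at hg
  exact hg.comp 0 (contDiffAt_const.mul contDiffAt_id)

theorem iteratedDeriv_pow_mul_iteratedDeriv_comp_mul_left_zero {m : ℕ} (k : ℕ) {f : 𝕜 → 𝕜}
    (c : 𝕜) (hf : ContDiffAt 𝕜 m (iteratedDeriv k f) 0) :
    iteratedDeriv m (fun z => z ^ k * iteratedDeriv k f (c * z)) 0
      = m.descFactorial k * c ^ (m - k) * iteratedDeriv m f 0 := by
  rw [iteratedDeriv_pow_mul_zero k (contDiffAt_comp_mul_left_zero hf c),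
    iteratedDeriv_comp_mul_left, smul_eq_mul, mul_zero, iteratedDeriv_iteratedDeriv]
  rcases le_or_gt k m with hkm | hmk
  · rw [Nat.sub_add_cancel hkm, mul_assoc]
  · simp [Nat.descFactorial_eq_zero_iff_lt.mpr hmk]

theorem iteratedDeriv_sum_pow_mul_iteratedDeriv_comp_mul_left_zero {m : ℕ} (s : Finset ℕ)
    (b : ℕ → 𝕜) (c : 𝕜) {f : 𝕜 → 𝕜} (hf : ∀ k ∈ s, ContDiffAt 𝕜 m (iteratedDeriv k f) 0) :
    iteratedDeriv m (fun z => ∑ k ∈ s, b k * (z ^ k * iteratedDeriv k f (c * z))) 0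
      = (∑ k ∈ s, b k * m.descFactorial k * c ^ (m - k)) * iteratedDeriv m f 0 := by
  have hterm : ∀ k ∈ s,
      ContDiffAt 𝕜 m (fun z => b k * (z ^ k * iteratedDeriv k f (c * z))) 0 := fun k hk =>
    contDiffAt_const.mul ((contDiffAt_id.pow k).mul (contDiffAt_comp_mul_left_zero (hf k hk) c))
  rw [iteratedDeriv_fun_sum hterm, Finset.sum_mul]
  refine Finset.sum_congr rfl fun k hk => ?_
  rw [iteratedDeriv_const_mul_field,
    iteratedDeriv_pow_mul_iteratedDeriv_comp_mul_left_zero k c (hf k hk)]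
  ring

end IteratedDeriv

theorem sum_Icc_mul_descFactorial_mul {K : Type*} [Field K] [CharZero K] (m n : ℕ)
    (u v : ℕ → K) :
    ∑ k ∈ Finset.Icc 1 n, u k * m.descFactorial k * v k
      = ∑ k ∈ Finset.Icc 1 (min m n), u k * ((m.factorial : K) / (m - k).factorial) * v k := by
  symm
  calc _ = ∑ k ∈ Finset.Icc 1 (min m n), u k * m.descFactorial k * v k := by
        refine Finset.sum_congr rfl fun k hk => ?_
        have hkm : k ≤ m := (Finset.mem_Icc.mp hk).2.trans (min_le_left m n)
        rw [← Nat.factorial_mul_descFactorial hkm, Nat.cast_mul,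
          mul_div_cancel_left₀ _ (Nat.cast_ne_zero.mpr (m - k).factorial_ne_zero)]
    _ = _ := by
        refine Finset.sum_subset (Finset.Icc_subset_Icc_right (min_le_right m n)) ?_
        intro k hk hkmin
        have hmk : m < k := by simp only [Finset.mem_Icc] at hk hkmin; omega
        simp [Nat.descFactorial_eq_zero_iff_lt.mpr hmk]

theorem stmt18_general (n : ℕ) (a c : ℕ → ℂ) (cc lam : ℂ) (f : ℂ → ℂ)
    (hf : DifferentiableOn ℂ f (ball 0 1))
    (heig : ∀ z ∈ ball (0 : ℂ) 1,
      ∑ k ∈ Finset.Icc 1 n, c k * (a k * z ^ k) * iteratedDeriv k f (cc * z)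
        = lam * f z)
    (m : ℕ) (hm : iteratedDeriv m f 0 ≠ 0) :
    lam = ∑ k ∈ Finset.Icc 1 (min m n),
      c k * a k * ((m.factorial : ℂ) / ((m - k).factorial : ℂ)) * cc ^ (m - k) := by
  have hball : ball (0 : ℂ) 1 ∈ nhds 0 := ball_mem_nhds 0 one_pos
  have hf0 : AnalyticAt ℂ f 0 := hf.analyticAt hball
  have hsmooth : ∀ k, ContDiffAt ℂ m (iteratedDeriv k f) 0 := fun k => by
    rw [iteratedDeriv_eq_iterate]
    exact (hf0.iterated_deriv k).contDiffAt
  have heig0 : (fun z => ∑ k ∈ Finset.Icc 1 n, c k * a k * (z ^ k * iteratedDeriv k f (cc * z)))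
      =ᶠ[nhds 0] fun z => lam * f z := by
    filter_upwards [hball] with z hz
    simp only [← heig z hz, mul_assoc]
  have hdiff := heig0.iteratedDeriv_eq m
  rw [iteratedDeriv_sum_pow_mul_iteratedDeriv_comp_mul_left_zero _ _ _ fun k _ => hsmooth k,
    iteratedDeriv_const_mul_field] at hdiff
  rw [← sum_Icc_mul_descFactorial_mul]
  exact (mul_right_cancel₀ hm hdiff).symm

/-- If `L f(z) = ∑_{k=1}^n c_k a_k zᵏ f⁽ᵏ⁾(cz)` satisfies `L f = λ f` on the
disk for a nonzero holomorphic `f` vanishing to order exactly `m` at `0`, then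
`λ = ∑_{k=1}^{min(m,n)} c_k a_k (m!/(m-k)!) c^{m-k}` (the empty sum `0` when `m = 0`). -/
theorem stmt18 (n : ℕ) (a c : ℕ → ℂ) (cc lam : ℂ) (f : ℂ → ℂ)
    (hf : DifferentiableOn ℂ f (ball 0 1))
    (hfne : ∃ z ∈ ball (0 : ℂ) 1, f z ≠ 0)
    (heig : ∀ z ∈ ball (0 : ℂ) 1,
      ∑ k ∈ Finset.Icc 1 n, c k * (a k * z ^ k) * iteratedDeriv k f (cc * z)
        = lam * f z)
    (m : ℕ) (hmlt : ∀ j, j < m → iteratedDeriv j f 0 = 0)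
    (hm : iteratedDeriv m f 0 ≠ 0) :
    lam = ∑ k ∈ Finset.Icc 1 (min m n),
      c k * a k * ((m.factorial : ℂ) / ((m - k).factorial : ℂ)) * cc ^ (m - k) :=
  stmt18_general n a c cc lam f hf heig m hm
end
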